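/- The generator matrix Q of the inhomogeneous symmetric simple exclusion process satisfies the detailed balance condition p(x)·Q(x,y) = p(y)·Q(y,x) for all pairs of distinct states x ≠ y, where p(x) = C·∏_{i : x_i ≠ 0} (α_{x_i}/β_{x_i}). Consequently p is a stationary distribution: for every state x, ∑_{y ≠ x} p(x)·Q(x,y) = ∑_{y ≠ x} p(y)·Q(y,x). -/

import Mathlib

open Finset

/-- `y` arises from `x` by a type-`k` particle arriving at a vacant boundary
site (site `0` or site `N-1`). -/
def IsArrival (N K : ℕ) (x y : Fin N → Fin (K + 1)) (k : Fin (K + 1)) : Prop :=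
  k ≠ 0 ∧ ∃ b : Fin N, ((b : ℕ) = 0 ∨ (b : ℕ) = N - 1) ∧ x b = 0 ∧
    y = Function.update x b k

/-- `y` arises from `x` by a type-`k` particle hopping from a site to an
adjacent vacant site. -/
def IsHop (N K : ℕ) (x y : Fin N → Fin (K + 1)) (k : Fin (K + 1)) : Prop :=
  k ≠ 0 ∧ ∃ i j : Fin N, ((i : ℕ) + 1 = (j : ℕ) ∨ (j : ℕ) + 1 = (i : ℕ)) ∧
    x i = k ∧ x j = 0 ∧ y = x ∘ Equiv.swap i j

open scoped Classical in
/-- Off-diagonal transition rates of the exclusion process: `α_k` for a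
type-`k` arrival at a vacant boundary site, `β_k` for a type-`k` departure
from a boundary site, `δ_k` for a type-`k` hop to an adjacent vacant site,
and `0` otherwise. -/
noncomputable def Qrate (N K : ℕ) (α β δ : Fin (K + 1) → ℝ)
    (x y : Fin N → Fin (K + 1)) : ℝ :=
  ∑ k ∈ univ.filter (fun k : Fin (K + 1) => k ≠ 0),
    ((if IsArrival N K x y k then α k else 0) +
     (if IsArrival N K y x k then β k else 0) +
     (if IsHop N K x y k then δ k else 0))

section Aux
open scoped Classical

/-- Hop moves are symmetric. -/
lemma hop_symm {N K : ℕ} {x y : Fin N → Fin (K + 1)} {k : Fin (K + 1)}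
    (h : IsHop N K x y k) : IsHop N K y x k := by
  obtain ⟨hk, i, j, hadj, hi, hj, hy⟩ := h
  refine ⟨hk, j, i, hadj.symm, ?_, ?_, ?_⟩
  · simp [hy, Equiv.swap_apply_right, hi]
  · simp [hy, Equiv.swap_apply_left, hj]
  · funext a
    simp [hy, Equiv.swap_comm j i]

/-- Rewrite the filtered product as a product over all sites. -/
lemma prod_filter_eq {N K : ℕ} (α β : Fin (K + 1) → ℝ) (x : Fin N → Fin (K + 1)) :
    (∏ i ∈ univ.filter (fun i => x i ≠ 0), α (x i) / β (x i))
      = ∏ i : Fin N, (if x i ≠ 0 then α (x i) / β (x i) else 1) := by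
  rw [Finset.prod_filter]

/-- The weight product after an arrival. -/
lemma prod_update {N K : ℕ} (α β : Fin (K + 1) → ℝ) (x : Fin N → Fin (K + 1))
    (b : Fin N) (k : Fin (K + 1)) (hb : x b = 0) (hk : k ≠ 0) :
    (∏ i ∈ univ.filter (fun i => Function.update x b k i ≠ 0),
        α (Function.update x b k i) / β (Function.update x b k i))
      = (α k / β k) *
        ∏ i ∈ univ.filter (fun i => x i ≠ 0), α (x i) / β (x i) := by
  rw [prod_filter_eq, prod_filter_eq]
  rw [← Finset.mul_prod_erase univ
      (fun i => if Function.update x b k i ≠ 0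
        then α (Function.update x b k i) / β (Function.update x b k i) else 1)
      (mem_univ b),
    ← Finset.mul_prod_erase univ
      (fun i => if x i ≠ 0 then α (x i) / β (x i) else 1) (mem_univ b)]
  have h1 : Function.update x b k b = k := Function.update_self b k x
  have h2 : ∀ i ∈ univ.erase b, Function.update x b k i = x i := by
    intro i hi
    exact Function.update_of_ne (Finset.mem_erase.mp hi).1 k x
  rw [Finset.prod_congr rfl (fun i hi => by rw [h2 i hi])]
  simp [h1, hb, hk]

/-- The weight product is invariant under a hop. -/
lemma prod_swap {N K : ℕ} (α β : Fin (K + 1) → ℝ) (x : Fin N → Fin (K + 1))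
    (i j : Fin N) :
    (∏ a ∈ univ.filter (fun a => (x ∘ Equiv.swap i j) a ≠ 0),
        α ((x ∘ Equiv.swap i j) a) / β ((x ∘ Equiv.swap i j) a))
      = ∏ a ∈ univ.filter (fun a => x a ≠ 0), α (x a) / β (x a) := by
  rw [prod_filter_eq, prod_filter_eq]
  exact Equiv.prod_comp (Equiv.swap i j)
    (fun a => if x a ≠ 0 then α (x a) / β (x a) else 1)

end Aux

open scoped Classical in
/-- The stationary weights `p(x) = C·∏_{i : x_i ≠ 0} α_{x_i}/β_{x_i}` satisfy
detailed balance with respect to the generator `Q`, and consequently the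
global balance (stationarity) equations hold. -/
theorem detailed_and_global_balance (N K : ℕ) (hN : 2 ≤ N) (hK : 1 ≤ K)
    (α β δ : Fin (K + 1) → ℝ)
    (hα : ∀ k, k ≠ 0 → 0 < α k) (hβ : ∀ k, k ≠ 0 → 0 < β k)
    (hδ : ∀ k, k ≠ 0 → 0 < δ k)
    (p : (Fin N → Fin (K + 1)) → ℝ)
    (hp : ∀ x, p x =
      ((1 + ∑ k ∈ univ.filter (fun k : Fin (K + 1) => k ≠ 0), α k / β k) ^ N)⁻¹ *
        ∏ i ∈ univ.filter (fun i => x i ≠ 0), α (x i) / β (x i)) :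
    (∀ x y, x ≠ y → p x * Qrate N K α β δ x y = p y * Qrate N K α β δ y x) ∧
    (∀ x, ∑ y ∈ univ.filter (fun y => y ≠ x), p x * Qrate N K α β δ x y =
          ∑ y ∈ univ.filter (fun y => y ≠ x), p y * Qrate N K α β δ y x) := by
  -- weights after an arrival
  have p_arr : ∀ (x y : Fin N → Fin (K + 1)) (k : Fin (K + 1)),
      IsArrival N K x y k → p y = (α k / β k) * p x := by
    intro x y k hA
    obtain ⟨hk, b, _, hb, hy⟩ := hA
    rw [hp, hp, hy, prod_update α β x b k hb hk]
    ring
  -- weights are hop-invariant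
  have p_hop : ∀ (x y : Fin N → Fin (K + 1)) (k : Fin (K + 1)),
      IsHop N K x y k → p y = p x := by
    intro x y k hH
    obtain ⟨hk, i, j, _, _, _, hy⟩ := hH
    rw [hp, hp, hy, prod_swap]
  have key : ∀ x y, x ≠ y →
      p x * Qrate N K α β δ x y = p y * Qrate N K α β δ y x := by
    intro x y hxy
    unfold Qrate
    rw [Finset.mul_sum, Finset.mul_sum]
    refine Finset.sum_congr rfl fun k hk => ?_
    have hk0 : k ≠ 0 := (Finset.mem_filter.mp hk).2
    have hβk : (β k) ≠ 0 := (hβ k hk0).ne'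
    have h1 : p x * (if IsArrival N K x y k then α k else 0)
        = p y * (if IsArrival N K x y k then β k else 0) := by
      split_ifs with h
      · rw [p_arr x y k h]
        field_simp
      · simp
    have h2 : p x * (if IsArrival N K y x k then β k else 0)
        = p y * (if IsArrival N K y x k then α k else 0) := by
      split_ifs with h
      · rw [p_arr y x k h]
        field_simp
      · simp
    have hHiff : IsHop N K x y k ↔ IsHop N K y x k := ⟨hop_symm, hop_symm⟩
    have h3 : p x * (if IsHop N K x y k then δ k else 0)
        = p y * (if IsHop N K y x k then δ k else 0) := by
      by_cases h : IsHop N K x y k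
      · rw [if_pos h, if_pos (hHiff.mp h), p_hop x y k h]
      · rw [if_neg h, if_neg (fun h' => h (hHiff.mpr h'))]
        simp
    linear_combination h1 + h2 + h3
  refine ⟨key, fun x => Finset.sum_congr rfl fun y hy => ?_⟩
  exact key x y (Ne.symm (Finset.mem_filter.mp hy).2)
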